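/- Let ε ∈ (0,1/4], ε₀ := (1−√(1−4ε))/2, p ∈ Δ(K), x a mixed action, and x' := c_{ε₀}(x,p). Then x' is ε-concise at p: for all i ∈ NR[x',ε,p] and all k ∈ K, x'(i|k) = (x'(NR[x',ε,p]|k)/x̄'^p(NR[x',ε,p]))·x̄'^p(i). -/

import Mathlib

/-!
Write `δ := ε₀`, so that `δ (1 - δ) = ε`. The map `c_δ(x,p)` preserves the marginal `x̄^p`; on the
ratios `x(i|k) / x̄^p(i)` it acts by `t ↦ (1 - δ) t + δ` for revealing actions, and for
`(x,δ)`-non-revealing ones it replaces the ratio by `(1 - δ) q_k + δ`, where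
`q_k = x(NR|k) / x̄^p(NR) ∈ [1 - δ, 1 + δ]` does not depend on `i`. Since `t ↦ (1 - δ) t + δ` maps
`[1 - δ, 1 + δ]` onto `[1 - ε, 1 + ε]` and its complement into the complement,
`NR[x',ε,p] = NR[x,δ,p]`, and on this set `x'(i|k) = ((1 - δ) q_k + δ) x̄'^p(i)` with a factor
depending only on `k`, which is conciseness.
-/

open Finset

noncomputable section
open Classical

/-- `p` is an element of the probability simplex Δ(K). -/
def pSimplex {K : Type*} [Fintype K] (p : K → ℝ) : Prop :=
  (∀ k, 0 ≤ p k) ∧ ∑ k, p k = 1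

/-- `x : K → Δ(I)` is a mixed action, written `x k i = x(i|k)`. -/
def MixedAction {K I : Type*} [Fintype K] [Fintype I] (x : K → I → ℝ) : Prop :=
  (∀ k i, 0 ≤ x k i) ∧ ∀ k, ∑ i, x k i = 1

/-- Marginal `x̄^p(i) = ∑_k p(k)·x(i|k)`. -/
def bar {K I : Type*} [Fintype K] (p : K → ℝ) (x : K → I → ℝ) (i : I) : ℝ :=
  ∑ k, p k * x k i

/-- Posterior `p^x(k|i)`. -/
def post {K I : Type*} [Fintype K] (p : K → ℝ) (x : K → I → ℝ) (i : I) (k : K) : ℝ :=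
  if bar p x i ≠ 0 then x k i * p k / bar p x i else p k

/-- The set `NR[x,ε,p]` of (x,ε)-non-revealing actions at p. -/
def NRset {K I : Type*} [Fintype K] [Fintype I] (x : K → I → ℝ) (ε : ℝ) (p : K → ℝ) :
    Finset I :=
  Finset.univ.filter fun i =>
    bar p x i ≠ 0 ∧ ∀ k, (1 - ε) * bar p x i ≤ x k i ∧ x k i ≤ (1 + ε) * bar p x i

/-- The set `R[x,ε,p]` of (x,ε)-revealing actions at p. -/
def Rset {K I : Type*} [Fintype K] [Fintype I] (x : K → I → ℝ) (ε : ℝ) (p : K → ℝ) :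
    Finset I :=
  (Finset.univ.filter fun i => bar p x i ≠ 0) \ NRset x ε p

/-- `x(A|k) = ∑_{i∈A} x(i|k)`. -/
def xOn {K I : Type*} (x : K → I → ℝ) (A : Finset I) (k : K) : ℝ := ∑ i ∈ A, x k i

/-- `x̄^p(A) = ∑_{i∈A} x̄^p(i)`. -/
def barOn {K I : Type*} [Fintype K] (p : K → ℝ) (x : K → I → ℝ) (A : Finset I) : ℝ :=
  ∑ i ∈ A, bar p x i

/-- The ε-silent mapping `c_ε(x,p)`. -/
def silent {K I : Type*} [Fintype K] [Fintype I] (ε : ℝ) (x : K → I → ℝ) (p : K → ℝ) :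
    K → I → ℝ :=
  fun k i =>
    if i ∈ NRset x ε p then
      ((1 - ε) * xOn x (NRset x ε p) k / barOn p x (NRset x ε p) + ε) * bar p x i
    else (1 - ε) * x k i + ε * bar p x i

section

variable {K I : Type*} [Fintype K] {p : K → ℝ}

lemma bar_nonneg {x : K → I → ℝ} (hp : ∀ k, 0 ≤ p k) (hx : ∀ k i, 0 ≤ x k i) (i : I) :
    0 ≤ bar p x i :=
  sum_nonneg fun k _ => mul_nonneg (hp k) (hx k i)

lemma barOn_pos_of_mem {x : K → I → ℝ} (hbar : ∀ i, 0 ≤ bar p x i) {A : Finset I} {i : I}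
    (hi : i ∈ A) (hi0 : bar p x i ≠ 0) : 0 < barOn p x A :=
  sum_pos' (fun j _ => hbar j) ⟨i, hi, (hbar i).lt_of_ne' hi0⟩

lemma sum_mul_xOn (p : K → ℝ) (x : K → I → ℝ) (A : Finset I) :
    ∑ k, p k * xOn x A k = barOn p x A := by
  simp only [xOn, barOn, bar, mul_sum]
  exact sum_comm

lemma eq_xOn_div_barOn_mul_bar {y : K → I → ℝ} {A : Finset I} {c : K → ℝ}
    (hy : ∀ i ∈ A, ∀ k, y k i = c k * bar p y i) (hA : barOn p y A ≠ 0) {i : I} (hi : i ∈ A)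
    (k : K) : y k i = xOn y A k / barOn p y A * bar p y i := by
  have hxOn : xOn y A k = c k * barOn p y A := by
    rw [xOn, barOn, mul_sum]
    exact sum_congr rfl fun j hj => hy j hj k
  rw [hxOn, mul_div_cancel_right₀ _ hA, hy i hi k]

variable [Fintype I] {x : K → I → ℝ} {δ : ℝ}

lemma mem_NRset {ε : ℝ} {i : I} : i ∈ NRset x ε p ↔
    bar p x i ≠ 0 ∧ ∀ k, (1 - ε) * bar p x i ≤ x k i ∧ x k i ≤ (1 + ε) * bar p x i := by
  simp [NRset]

lemma xOn_NRset_bounds (ε : ℝ) (k : K) :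
    (1 - ε) * barOn p x (NRset x ε p) ≤ xOn x (NRset x ε p) k ∧
      xOn x (NRset x ε p) k ≤ (1 + ε) * barOn p x (NRset x ε p) := by
  rw [barOn, xOn, mul_sum, mul_sum]
  exact ⟨sum_le_sum fun i hi => ((mem_NRset.1 hi).2 k).1,
    sum_le_sum fun i hi => ((mem_NRset.1 hi).2 k).2⟩

/-- The factor by which `c_δ(x,p)` rescales the marginal of a `(x,δ)`-non-revealing action. -/
def silentCoeff (δ : ℝ) (x : K → I → ℝ) (p : K → ℝ) (k : K) : ℝ :=
  (1 - δ) * xOn x (NRset x δ p) k / barOn p x (NRset x δ p) + δ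

lemma silent_of_mem {i : I} (hi : i ∈ NRset x δ p) (k : K) :
    silent δ x p k i = silentCoeff δ x p k * bar p x i :=
  if_pos hi

lemma silent_of_notMem {i : I} (hi : i ∉ NRset x δ p) (k : K) :
    silent δ x p k i = (1 - δ) * x k i + δ * bar p x i :=
  if_neg hi

lemma sum_mul_silentCoeff (hp : pSimplex p) (hB : barOn p x (NRset x δ p) ≠ 0) :
    ∑ k, p k * silentCoeff δ x p k = 1 := by
  calc ∑ k, p k * silentCoeff δ x p k
      = (1 - δ) / barOn p x (NRset x δ p) * ∑ k, p k * xOn x (NRset x δ p) k + δ * ∑ k, p k := by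
        simp only [silentCoeff, mul_sum, ← sum_add_distrib]
        refine sum_congr rfl fun k _ => ?_
        ring
    _ = 1 := by rw [sum_mul_xOn, hp.2]; field_simp; ring

lemma silentCoeff_bounds (hδ : δ ≤ 1) (hB : 0 < barOn p x (NRset x δ p)) (k : K) :
    1 - δ * (1 - δ) ≤ silentCoeff δ x p k ∧ silentCoeff δ x p k ≤ 1 + δ * (1 - δ) := by
  obtain ⟨hlo, hhi⟩ := xOn_NRset_bounds (p := p) (x := x) δ k
  have hq₁ : 1 - δ ≤ xOn x (NRset x δ p) k / barOn p x (NRset x δ p) := (le_div_iff₀ hB).2 hlo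
  have hq₂ : xOn x (NRset x δ p) k / barOn p x (NRset x δ p) ≤ 1 + δ := (div_le_iff₀ hB).2 hhi
  rw [silentCoeff, mul_div_assoc]
  constructor <;> nlinarith [sub_nonneg.2 hδ]

lemma bar_silent (hp : pSimplex p) (hx : ∀ k i, 0 ≤ x k i) (i : I) :
    bar p (silent δ x p) i = bar p x i := by
  by_cases hi : i ∈ NRset x δ p
  · have hB := barOn_pos_of_mem (bar_nonneg hp.1 hx) hi (mem_NRset.1 hi).1
    calc bar p (silent δ x p) i = (∑ k, p k * silentCoeff δ x p k) * bar p x i := by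
          rw [bar, sum_mul]
          exact sum_congr rfl fun k _ => by rw [silent_of_mem hi]; ring
      _ = bar p x i := by rw [sum_mul_silentCoeff hp hB.ne', one_mul]
  · calc bar p (silent δ x p) i = ∑ k, ((1 - δ) * (p k * x k i) + δ * bar p x i * p k) := by
          rw [bar]
          exact sum_congr rfl fun k _ => by rw [silent_of_notMem hi]; ring
      _ = (1 - δ) * bar p x i + δ * bar p x i * ∑ k, p k := by
          rw [sum_add_distrib, ← mul_sum, ← mul_sum, bar]
      _ = bar p x i := by rw [hp.2]; ring

lemma barOn_silent (hp : pSimplex p) (hx : ∀ k i, 0 ≤ x k i) (A : Finset I) :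
    barOn p (silent δ x p) A = barOn p x A :=
  sum_congr rfl fun i _ => bar_silent hp hx i

lemma NRset_subset_NRset_silent (hp : pSimplex p) (hx : ∀ k i, 0 ≤ x k i) (hδ : δ ≤ 1) :
    NRset x δ p ⊆ NRset (silent δ x p) (δ * (1 - δ)) p := by
  intro i hi
  have hi0 := (mem_NRset.1 hi).1
  have hb : 0 ≤ bar p x i := bar_nonneg hp.1 hx i
  have hB := barOn_pos_of_mem (bar_nonneg hp.1 hx) hi hi0
  refine mem_NRset.2 ⟨by rwa [bar_silent hp hx], fun k => ?_⟩
  obtain ⟨hlo, hhi⟩ := silentCoeff_bounds hδ hB k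
  rw [bar_silent hp hx, silent_of_mem hi]
  exact ⟨mul_le_mul_of_nonneg_right hlo hb, mul_le_mul_of_nonneg_right hhi hb⟩

lemma NRset_silent_subset (hp : pSimplex p) (hx : ∀ k i, 0 ≤ x k i) (hδ : δ < 1) :
    NRset (silent δ x p) (δ * (1 - δ)) p ⊆ NRset x δ p := by
  intro i hi
  rw [mem_NRset, bar_silent hp hx] at hi
  obtain ⟨hi0, hbounds⟩ := hi
  by_cases hiN : i ∈ NRset x δ p
  · exact hiN
  refine mem_NRset.2 ⟨hi0, fun k => ?_⟩
  have hk := hbounds k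
  rw [silent_of_notMem hiN] at hk
  have hδ' : 0 < 1 - δ := sub_pos.2 hδ
  exact ⟨le_of_mul_le_mul_left (by linarith [hk.1]) hδ',
    le_of_mul_le_mul_left (by linarith [hk.2]) hδ'⟩

lemma NRset_silent (hp : pSimplex p) (hx : ∀ k i, 0 ≤ x k i) (hδ : δ < 1) :
    NRset (silent δ x p) (δ * (1 - δ)) p = NRset x δ p :=
  (NRset_silent_subset hp hx hδ).antisymm (NRset_subset_NRset_silent hp hx hδ.le)

def IsConcise (y : K → I → ℝ) (ε : ℝ) (p : K → ℝ) : Prop :=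
  ∀ i ∈ NRset y ε p, ∀ k, y k i = xOn y (NRset y ε p) k / barOn p y (NRset y ε p) * bar p y i

theorem silent_isConcise (hp : pSimplex p) (hx : ∀ k i, 0 ≤ x k i) (hδ : δ < 1) :
    IsConcise (silent δ x p) (δ * (1 - δ)) p := by
  intro i hi
  rw [NRset_silent hp hx hδ] at hi ⊢
  have hB := barOn_pos_of_mem (bar_nonneg hp.1 hx) hi (mem_NRset.1 hi).1
  refine eq_xOn_div_barOn_mul_bar (c := silentCoeff δ x p) (fun j hj k => ?_) ?_ hi
  · rw [silent_of_mem hj, bar_silent hp hx]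
  · rw [barOn_silent hp hx]
    exact hB.ne'

end

lemma one_sub_sqrt_div_two_mul_one_sub {ε : ℝ} (hε : ε ≤ 1 / 4) :
    (1 - √(1 - 4 * ε)) / 2 * (1 - (1 - √(1 - 4 * ε)) / 2) = ε := by
  linear_combination (-1 / 4 : ℝ) * Real.sq_sqrt (by linarith : (0 : ℝ) ≤ 1 - 4 * ε)

theorem silent_is_concise_general {K I : Type*} [Fintype K] [Fintype I]
    (ε : ℝ) (hε1 : ε ≤ 1/4)
    (p : K → ℝ) (hp : pSimplex p)
    (x : K → I → ℝ) (hx : MixedAction x) :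
    ∀ i ∈ NRset (silent ((1 - Real.sqrt (1 - 4*ε))/2) x p) ε p, ∀ k : K,
      silent ((1 - Real.sqrt (1 - 4*ε))/2) x p k i =
        xOn (silent ((1 - Real.sqrt (1 - 4*ε))/2) x p)
            (NRset (silent ((1 - Real.sqrt (1 - 4*ε))/2) x p) ε p) k /
          barOn p (silent ((1 - Real.sqrt (1 - 4*ε))/2) x p)
            (NRset (silent ((1 - Real.sqrt (1 - 4*ε))/2) x p) ε p) *
          bar p (silent ((1 - Real.sqrt (1 - 4*ε))/2) x p) i := by
  have hδ : (1 - Real.sqrt (1 - 4*ε))/2 < 1 := by linarith [Real.sqrt_nonneg (1 - 4*ε)]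
  have h := silent_isConcise hp hx.1 hδ
  rwa [one_sub_sqrt_div_two_mul_one_sub hε1] at h

/-- x' = c_{ε₀}(x,p) is ε-concise at p. -/
theorem silent_is_concise {K I : Type*} [Fintype K] [Fintype I] [Nonempty K] [Nonempty I]
    (ε : ℝ) (hε0 : 0 < ε) (hε1 : ε ≤ 1/4)
    (p : K → ℝ) (hp : pSimplex p)
    (x : K → I → ℝ) (hx : MixedAction x) :
    ∀ i ∈ NRset (silent ((1 - Real.sqrt (1 - 4*ε))/2) x p) ε p, ∀ k : K,
      silent ((1 - Real.sqrt (1 - 4*ε))/2) x p k i =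
        xOn (silent ((1 - Real.sqrt (1 - 4*ε))/2) x p)
            (NRset (silent ((1 - Real.sqrt (1 - 4*ε))/2) x p) ε p) k /
          barOn p (silent ((1 - Real.sqrt (1 - 4*ε))/2) x p)
            (NRset (silent ((1 - Real.sqrt (1 - 4*ε))/2) x p) ε p) *
          bar p (silent ((1 - Real.sqrt (1 - 4*ε))/2) x p) i :=
  silent_is_concise_general ε hε1 p hp x hx
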